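/- For a compact family F of finite subsets of ℕ, a countable ordinal α, and a nonempty finite set s, we have s ∈ ∂^(α)F if and only if s \ {min s} ∈ ∂^(α)(F_{min s}), where F_{n} = {t : {n} < t and {n} ∪ t ∈ F}. -/

import Mathlib

open Set

def chi (s : Finset ℕ) : ℕ → Bool := fun n => decide (n ∈ s)

def IsCompactFam (F : Set (Finset ℕ)) : Prop := IsClosed (chi '' F)

def Hered (F : Set (Finset ℕ)) : Prop := ∀ ⦃s t : Finset ℕ⦄, s ⊆ t → t ∈ F → s ∈ F

def Preceq (s t : Finset ℕ) : Prop :=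
  List.Forall₂ (· ≤ ·) (s.sort (· ≤ ·)) (t.sort (· ≤ ·))

def SpreadingOn (F : Set (Finset ℕ)) (M : Set ℕ) : Prop :=
  ∀ ⦃s t : Finset ℕ⦄, s ∈ F → Preceq s t → ↑t ⊆ M → t ∈ F

def Interpolates (t s : Finset ℕ) : Prop :=
  List.Forall₂ (· ≤ ·) (t.sort (· ≤ ·)) (s.sort (· ≤ ·)) ∧
  List.Forall₂ (· < ·) ((s.sort (· ≤ ·)).dropLast) ((t.sort (· ≤ ·)).tail)

def Ad (F : Set (Finset ℕ)) : Set (Finset ℕ) := {s | ∃ t ∈ F, Interpolates t s}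

def Restr (F : Set (Finset ℕ)) (M : Set ℕ) : Set (Finset ℕ) := {s ∈ F | ↑s ⊆ M}

noncomputable def iterDeriv {X : Type} [TopologicalSpace X] (A : Set X) (o : Ordinal.{0}) : Set X :=
  Ordinal.limitRecOn o A (fun _ ih => derivedSet ih)
    (fun o _ ih => ⋂ (b : Iio o), ih b b.2)

noncomputable def cbIndex (F : Set (Finset ℕ)) : Ordinal.{0} :=
  sInf {o : Ordinal | iterDeriv (chi '' F) o ⊆ {chi ∅}}

def sec (F : Set (Finset ℕ)) (n : ℕ) : Set (Finset ℕ) :=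
  {t | (∀ k ∈ t, n < k) ∧ insert n t ∈ F}

open scoped Classical in
noncomputable def IsHomogOn (F : Set (Finset ℕ)) (M : Set ℕ) (α : Ordinal.{0}) : Prop :=
  if α = 0 then F = {∅}
  else if h : ∃ β, α = Order.succ β then
    ∅ ∈ F ∧ ∀ n ∈ M, IsHomogOn (sec F n) (M ∩ Set.Ioi n) h.choose
  else
    ∅ ∈ F ∧ ∃ g : ℕ → Set.Iio α,
      (∀ n ∈ M, ∀ m ∈ M, n < m → (g n : Ordinal) < (g m : Ordinal)) ∧
      (∀ β < α, ∃ n ∈ M, β < (g n : Ordinal)) ∧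
      ∀ n ∈ M, IsHomogOn (sec F n) (M ∩ Set.Ioi n) (g n)
termination_by α
decreasing_by
  · exact lt_of_lt_of_le (Order.lt_succ _) h.choose_spec.ge
  · exact (g n).2

open scoped Classical in
noncomputable def IsUnifOn (F : Set (Finset ℕ)) (M : Set ℕ) (α : Ordinal.{0}) : Prop :=
  if α = 0 then F = {∅}
  else if h : ∃ β, α = Order.succ β then
    ∀ n ∈ M, IsUnifOn (sec F n) (M ∩ Set.Ioi n) h.choose
  else
    ∃ g : ℕ → Set.Iio α,
      (∀ n ∈ M, ∀ m ∈ M, n < m → (g n : Ordinal) < (g m : Ordinal)) ∧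
      (∀ β < α, ∃ n ∈ M, β < (g n : Ordinal)) ∧
      ∀ n ∈ M, IsUnifOn (sec F n) (M ∩ Set.Ioi n) (g n)
termination_by α
decreasing_by
  · exact lt_of_lt_of_le (Order.lt_succ _) h.choose_spec.ge
  · exact (g n).2

def osum (F G : Set (Finset ℕ)) : Set (Finset ℕ) :=
  {u | ∃ s t : Finset ℕ, s ∈ G ∧ t ∈ F ∧ (∀ a ∈ s, ∀ b ∈ t, a < b) ∧ u = s ∪ t}

def otimes (F G : Set (Finset ℕ)) : Set (Finset ℕ) :=
  {u | ∃ l : List (Finset ℕ),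
    l.Chain' (fun a b => ∀ x ∈ a, ∀ y ∈ b, x < y) ∧
    (∀ s ∈ l, s ∈ F ∧ s.Nonempty) ∧
    (l.map fun s => sInf (↑s : Set ℕ)).toFinset ∈ G ∧
    u = l.foldr (· ∪ ·) ∅}

def IsRegularOn (F : Set (Finset ℕ)) (M : Set ℕ) : Prop :=
  IsCompactFam F ∧ Hered F ∧ SpreadingOn F M ∧ ∀ s ∈ F, ↑s ⊆ M

def InitSeg (s t : Finset ℕ) : Prop := s ⊆ t ∧ ∀ x ∈ t, x ∉ s → ∀ y ∈ s, y < x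

def maxElems (F : Set (Finset ℕ)) : Set (Finset ℕ) :=
  {t ∈ F | ∀ u ∈ F, InitSeg t u → u = t}

section auxLemmas

variable {X Y : Type} [TopologicalSpace X] [TopologicalSpace Y]

lemma iterDeriv_zero' (A : Set X) : iterDeriv A 0 = A :=
  Ordinal.limitRecOn_zero _ _ _

lemma iterDeriv_succ' (A : Set X) (o : Ordinal) :
    iterDeriv A (Order.succ o) = derivedSet (iterDeriv A o) :=
  Ordinal.limitRecOn_succ _ _ _ _

lemma iterDeriv_limit' (A : Set X) {o : Ordinal} (h : Order.IsSuccLimit o) :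
    iterDeriv A o = ⋂ (b : Iio o), iterDeriv A b :=
  Ordinal.limitRecOn_limit _ _ _ _ h

lemma derivedSet_image' (e : X ≃ₜ Y) (A : Set X) :
    derivedSet (e '' A) = e '' derivedSet A := by
  apply subset_antisymm
  · intro y hy
    have := e.symm.continuous.image_derivedSet (A := e '' A)
      e.symm.injective ⟨y, hy, rfl⟩
    rw [show e.symm '' (e '' A) = A by simp [Set.image_image]] at this
    exact ⟨e.symm y, this, by simp⟩
  · exact e.continuous.image_derivedSet e.injective

lemma iterDeriv_image' (e : X ≃ₜ Y) (A : Set X) (o : Ordinal) :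
    iterDeriv (e '' A) o = e '' iterDeriv A o := by
  induction o using Ordinal.limitRecOn with
  | zero => rw [iterDeriv_zero', iterDeriv_zero']
  | add_one o ih => rw [Ordinal.add_one_eq_succ, iterDeriv_succ', iterDeriv_succ', ih, derivedSet_image']
  | limit o hlim ih =>
    rw [iterDeriv_limit' _ hlim, iterDeriv_limit' _ hlim,
      Set.image_iInter e.bijective]
    exact Set.iInter_congr fun b => ih b b.2

lemma derivedSet_inter_clopen' {W : Set X} (hW : IsClopen W) (A : Set X) :
    derivedSet (A ∩ W) = derivedSet A ∩ W := by
  apply subset_antisymm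
  · intro x hx
    refine ⟨derivedSet_mono _ _ Set.inter_subset_left hx, ?_⟩
    exact hW.isClosed.closure_subset
      ((derivedSet_subset_closure _).trans (closure_mono Set.inter_subset_right) hx)
  · rintro x ⟨hx, hxW⟩
    rw [mem_derivedSet, accPt_iff_nhds] at hx ⊢
    intro U hU
    obtain ⟨y, ⟨hyU, hyA⟩, hyx⟩ := hx (U ∩ W) (Filter.inter_mem hU (hW.isOpen.mem_nhds hxW))
    exact ⟨y, ⟨hyU.1, hyA, hyU.2⟩, hyx⟩

lemma iterDeriv_inter_clopen' {W : Set X} (hW : IsClopen W) (A : Set X) (o : Ordinal) :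
    iterDeriv (A ∩ W) o = iterDeriv A o ∩ W := by
  induction o using Ordinal.limitRecOn with
  | zero => rw [iterDeriv_zero', iterDeriv_zero']
  | add_one o ih => rw [Ordinal.add_one_eq_succ, iterDeriv_succ', iterDeriv_succ', ih, derivedSet_inter_clopen' hW]
  | limit o hlim ih =>
    haveI : Nonempty (Iio o) := ⟨⟨0, hlim.pos⟩⟩
    rw [iterDeriv_limit' _ hlim, iterDeriv_limit' _ hlim]
    calc ⋂ (b : Iio o), iterDeriv (A ∩ W) b.1
        = ⋂ (b : Iio o), (iterDeriv A b.1 ∩ W) := Set.iInter_congr fun b => ih b b.2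
      _ = (⋂ (b : Iio o), iterDeriv A b.1) ∩ W := (Set.iInter_inter _ _).symm

end auxLemmas

def flipFun (n : ℕ) (x : ℕ → Bool) : ℕ → Bool := fun k => if k = n then !(x k) else x k

lemma flipFun_involutive (n : ℕ) : Function.Involutive (flipFun n) := by
  intro x; funext k; by_cases h : k = n <;> simp [flipFun, h]

lemma flipFun_continuous (n : ℕ) : Continuous (flipFun n) := by
  refine continuous_pi fun k => ?_
  by_cases h : k = n
  · simp only [flipFun, if_pos h]
    exact (continuous_of_discreteTopology (α := Bool) (β := Bool) (f := Bool.not)).comp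
      (continuous_apply k)
  · simp only [flipFun, if_neg h]
    exact continuous_apply k

noncomputable def flipHomeo (n : ℕ) : (ℕ → Bool) ≃ₜ (ℕ → Bool) where
  toEquiv := (flipFun_involutive n).toPerm _
  continuous_toFun := flipFun_continuous n
  continuous_invFun := flipFun_continuous n

lemma flipHomeo_apply (n : ℕ) (x : ℕ → Bool) : flipHomeo n x = flipFun n x := rfl

lemma isClopen_lowW (n : ℕ) :
    IsClopen {x : ℕ → Bool | x n = true ∧ ∀ k < n, x k = false} := by
  haveI : DiscreteTopology (Fin (n + 1) → Bool) := Pi.discreteTopology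
  have hπ : Continuous (fun (x : ℕ → Bool) (k : Fin (n + 1)) => x k) :=
    continuous_pi fun k => continuous_apply _
  have heq : {x : ℕ → Bool | x n = true ∧ ∀ k < n, x k = false} =
      (fun (x : ℕ → Bool) (k : Fin (n + 1)) => x k) ⁻¹'
      {y : Fin (n + 1) → Bool |
        y ⟨n, Nat.lt_succ_self n⟩ = true ∧ ∀ k : Fin (n + 1), (k : ℕ) < n → y k = false} := by
    ext x
    simp only [Set.mem_setOf_eq, Set.mem_preimage]
    exact ⟨fun ⟨h1, h2⟩ => ⟨h1, fun k hk => h2 k hk⟩,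
      fun ⟨h1, h2⟩ => ⟨h1, fun k hk => h2 ⟨k, by omega⟩ hk⟩⟩
  rw [heq]
  exact ⟨(isClosed_discrete _).preimage hπ, (isOpen_discrete _).preimage hπ⟩

/-- s ∈ ∂^(α)F iff s \ {min s} ∈ ∂^(α)(F_{min s}). -/
theorem mem_iterDeriv_iff_shift_mem_section (F : Set (Finset ℕ)) (hF : IsCompactFam F)
    (α : Ordinal.{0}) (hα : α.card ≤ Cardinal.aleph0)
    (s : Finset ℕ) (hs : s.Nonempty) :
    chi s ∈ iterDeriv (chi '' F) α ↔
      chi (s.erase (s.min' hs)) ∈ iterDeriv (chi '' sec F (s.min' hs)) α := by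
  
  set n := s.min' hs with hn_def
  have hn : n ∈ s := s.min'_mem hs
  have hmin : ∀ k ∈ s, n ≤ k := fun k hk => s.min'_le k hk
  set e := flipHomeo n
  set A := chi '' F
  set B := chi '' sec F n
  set W := {x : ℕ → Bool | x n = true ∧ ∀ k < n, x k = false} with hW_def
  have hW : IsClopen W := isClopen_lowW n
  have himg : e '' B = A ∩ W := by
    ext x
    constructor
    · rintro ⟨_, ⟨t, ⟨htgt, htF⟩, rfl⟩, rfl⟩
      have hnt : n ∉ t := fun h => lt_irrefl n (htgt n h)
      have h1 : e (chi t) = chi (insert n t) := by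
        funext k
        show flipFun n (chi t) k = chi (insert n t) k
        by_cases hk : k = n
        · subst hk; simp [flipFun, chi, hnt]
        · simp [flipFun, chi, hk]
      refine ⟨⟨insert n t, htF, h1.symm⟩, ?_, ?_⟩
      · show flipFun n (chi t) n = true
        simp [flipFun, chi, hnt]
      · intro k hk
        show flipFun n (chi t) k = false
        have hkt : k ∉ t := fun h => absurd (htgt k h) (by omega)
        have hkn : k ≠ n := by omega
        simp [flipFun, chi, hkn, hkt]
    · rintro ⟨⟨u, hu, rfl⟩, h1, h2⟩
      have hnu : n ∈ u := by simpa [chi] using h1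
      have hlow : ∀ k < n, k ∉ u := fun k hk => by simpa [chi] using h2 k hk
      refine ⟨chi (u.erase n), ⟨u.erase n, ⟨?_, ?_⟩, rfl⟩, ?_⟩
      · intro k hk
        rw [Finset.mem_erase] at hk
        rcases Nat.lt_trichotomy n k with h | h | h
        · exact h
        · exact absurd h.symm hk.1
        · exact absurd hk.2 (hlow k h)
      · rwa [Finset.insert_erase hnu]
      · funext k
        show flipFun n (chi (u.erase n)) k = chi u k
        by_cases hk : k = n
        · subst hk; simp [flipFun, chi, hnu]
        · simp [flipFun, chi, hk, Finset.mem_erase]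
  have hsW : chi s ∈ W := by
    refine ⟨by simp [chi, hn], fun k hk => ?_⟩
    have : k ∉ s := fun h => absurd (hmin k h) (by omega)
    simp [chi, this]
  have hes : e (chi (s.erase n)) = chi s := by
    funext k
    show flipFun n (chi (s.erase n)) k = chi s k
    by_cases hk : k = n
    · subst hk; simp [flipFun, chi, hn]
    · simp [flipFun, chi, hk, Finset.mem_erase]
  have key : iterDeriv A α ∩ W = e '' iterDeriv B α := by
    rw [← iterDeriv_inter_clopen' hW, ← himg, iterDeriv_image']
  constructor
  · intro h
    have hmem : chi s ∈ e '' iterDeriv B α := by rw [← key]; exact ⟨h, hsW⟩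
    obtain ⟨y, hy, hey⟩ := hmem
    have : y = chi (s.erase n) := e.injective (by rw [hey, hes])
    rwa [this] at hy
  · intro h
    have hmem : chi s ∈ e '' iterDeriv B α := ⟨chi (s.erase n), h, hes⟩
    rw [← key] at hmem
    exact hmem.1
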